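/- arXiv:0903.2012 — 4 statements merged into one kernel-verified Lean document; each statement's English description precedes it below -/
import Mathlib

section
/- For κ ∈ (0,1), the function exp_κ : ℝ → ℝ is strictly convex on ℝ. -/
noncomputable def kexp (κ x : ℝ) : ℝ :=
  (κ * x + Real.sqrt (1 + κ ^ 2 * x ^ 2)) ^ (1 / κ)

private lemma hq_pos (κ x : ℝ) : 0 < 1 + κ ^ 2 * x ^ 2 := by positivity

private lemma hs_pos (κ x : ℝ) : 0 < Real.sqrt (1 + κ ^ 2 * x ^ 2) :=
  Real.sqrt_pos.mpr (hq_pos κ x)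

private lemma habs_lt (κ : ℝ) (hκ0 : 0 < κ) (hκ1 : κ < 1) (x : ℝ) :
    |κ * x| < Real.sqrt (1 + κ ^ 2 * x ^ 2) := by
  rw [Real.lt_sqrt (abs_nonneg _), sq_abs]
  nlinarith

private lemma hu_pos (κ : ℝ) (hκ0 : 0 < κ) (hκ1 : κ < 1) (x : ℝ) :
    0 < κ * x + Real.sqrt (1 + κ ^ 2 * x ^ 2) := by
  have h := habs_lt κ hκ0 hκ1 x
  have := neg_abs_le (κ * x)
  linarith

private lemma hasDerivAt_s (κ x : ℝ) :
    HasDerivAt (fun x => Real.sqrt (1 + κ ^ 2 * x ^ 2))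
      (κ ^ 2 * x / Real.sqrt (1 + κ ^ 2 * x ^ 2)) x := by
  have hg : HasDerivAt (fun x : ℝ => 1 + κ ^ 2 * x ^ 2) (κ ^ 2 * (2 * x)) x := by
    simpa using ((hasDerivAt_pow 2 x).const_mul (κ ^ 2)).const_add 1
  have := hg.sqrt (ne_of_gt (hq_pos κ x))
  convert this using 1
  have hs := hs_pos κ x
  field_simp

private lemma hasDerivAt_kexp (κ : ℝ) (hκ0 : 0 < κ) (hκ1 : κ < 1) (x : ℝ) :
    HasDerivAt (kexp κ)
      ((κ * x + Real.sqrt (1 + κ ^ 2 * x ^ 2)) ^ (1 / κ)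
        / Real.sqrt (1 + κ ^ 2 * x ^ 2)) x := by
  have hs := hs_pos κ x
  have hu := hu_pos κ hκ0 hκ1 x
  have hu' : HasDerivAt (fun x => κ * x + Real.sqrt (1 + κ ^ 2 * x ^ 2))
      (κ + κ ^ 2 * x / Real.sqrt (1 + κ ^ 2 * x ^ 2)) x := by
    have h := ((hasDerivAt_id x).const_mul κ).add (hasDerivAt_s κ x)
    simp only [id, mul_one] at h
    exact h
  have hf := hu'.rpow_const (p := 1 / κ) (Or.inl (ne_of_gt hu))
  convert hf using 1
  · rfl
  set s := Real.sqrt (1 + κ ^ 2 * x ^ 2)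
  set u := κ * x + s with hu_def
  have huu : u ^ (1 / κ) = u ^ (1 / κ - 1) * u := by
    have h := Real.rpow_add hu (1 / κ - 1) 1
    rw [Real.rpow_one] at h
    rw [← h]
    norm_num
  rw [huu]
  have hκ : κ ≠ 0 := ne_of_gt hκ0
  field_simp
  ring

private lemma hasDerivAt_kexp' (κ : ℝ) (hκ0 : 0 < κ) (hκ1 : κ < 1) (x : ℝ) :
    HasDerivAt (fun x => (κ * x + Real.sqrt (1 + κ ^ 2 * x ^ 2)) ^ (1 / κ)
        / Real.sqrt (1 + κ ^ 2 * x ^ 2))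
      ((κ * x + Real.sqrt (1 + κ ^ 2 * x ^ 2)) ^ (1 / κ)
        * (1 - κ ^ 2 * x / Real.sqrt (1 + κ ^ 2 * x ^ 2)) / (1 + κ ^ 2 * x ^ 2)) x := by
  have hs := hs_pos κ x
  have hu := hu_pos κ hκ0 hκ1 x
  have hn : HasDerivAt (fun x => (κ * x + Real.sqrt (1 + κ ^ 2 * x ^ 2)) ^ (1 / κ))
      ((κ * x + Real.sqrt (1 + κ ^ 2 * x ^ 2)) ^ (1 / κ)
        / Real.sqrt (1 + κ ^ 2 * x ^ 2)) x := hasDerivAt_kexp κ hκ0 hκ1 x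
  have hd := hn.div (hasDerivAt_s κ x) (ne_of_gt hs)
  refine HasDerivAt.congr_deriv hd ?_
  set s := Real.sqrt (1 + κ ^ 2 * x ^ 2)
  have hs2 : s ^ 2 = 1 + κ ^ 2 * x ^ 2 := Real.sq_sqrt (hq_pos κ x).le
  rw [← hs2]
  field_simp

theorem kexp_strictConvexOn (κ : ℝ) (hκ : κ ∈ Set.Ioo (0:ℝ) 1) :
    StrictConvexOn ℝ Set.univ (kexp κ) := by
  obtain ⟨hκ0, hκ1⟩ := hκ
  have hderiv : deriv (kexp κ) = fun x =>
      (κ * x + Real.sqrt (1 + κ ^ 2 * x ^ 2)) ^ (1 / κ) / Real.sqrt (1 + κ ^ 2 * x ^ 2) :=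
    funext fun x => (hasDerivAt_kexp κ hκ0 hκ1 x).deriv
  apply strictConvexOn_of_deriv2_pos convex_univ
  · apply Continuous.continuousOn
    apply Continuous.rpow_const
    · exact (continuous_const.mul continuous_id).add
        ((continuous_const.add (continuous_const.mul (continuous_pow 2))).sqrt)
    · intro x; exact Or.inl (ne_of_gt (hu_pos κ hκ0 hκ1 x))
  · intro x _
    have h2 : deriv (deriv (kexp κ)) x =
        (κ * x + Real.sqrt (1 + κ ^ 2 * x ^ 2)) ^ (1 / κ)
        * (1 - κ ^ 2 * x / Real.sqrt (1 + κ ^ 2 * x ^ 2)) / (1 + κ ^ 2 * x ^ 2) := by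
      rw [hderiv]
      exact (hasDerivAt_kexp' κ hκ0 hκ1 x).deriv
    have : deriv^[2] (kexp κ) x = deriv (deriv (kexp κ)) x := by
      simp [Function.iterate_succ]
    rw [this, h2]
    have hs := hs_pos κ x
    have hu := hu_pos κ hκ0 hκ1 x
    have hq := hq_pos κ x
    have hpow : 0 < (κ * x + Real.sqrt (1 + κ ^ 2 * x ^ 2)) ^ (1 / κ) :=
      Real.rpow_pos_of_pos hu _
    have hlt : κ ^ 2 * x < Real.sqrt (1 + κ ^ 2 * x ^ 2) := by
      have h1 : κ ^ 2 * x ≤ |κ * x| := by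
        rw [abs_mul]
        calc κ ^ 2 * x ≤ κ ^ 2 * |x| := by
              have : x ≤ |x| := le_abs_self x
              nlinarith
          _ ≤ κ * |x| := by
              have hk : κ ^ 2 ≤ κ := by nlinarith
              exact mul_le_mul_of_nonneg_right hk (abs_nonneg x)
          _ ≤ |κ| * |x| := by rw [abs_of_pos hκ0]
      exact lt_of_le_of_lt h1 (habs_lt κ hκ0 hκ1 x)
    have h3 : κ ^ 2 * x / Real.sqrt (1 + κ ^ 2 * x ^ 2) < 1 :=
      (div_lt_one hs).mpr hlt
    have : 0 < 1 - κ ^ 2 * x / Real.sqrt (1 + κ ^ 2 * x ^ 2) := by linarith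
    positivity
end

section
/- For κ ∈ (0,1) and y₁, y₂ > 0, with a = y₁^κ, b = y₂^κ, the quantity z = (y₁ ⊗_κ y₂)^κ satisfies ab·z² + (1 − ab)(a + b)·z − ab = 0. -/
noncomputable def kln (κ y : ℝ) : ℝ := (y ^ κ - y ^ (-κ)) / (2 * κ)

theorem kprod_quadratic (κ : ℝ) (hκ : κ ∈ Set.Ioo (0:ℝ) 1) (y₁ y₂ : ℝ)
    (h₁ : 0 < y₁) (h₂ : 0 < y₂)
    (a b z : ℝ) (ha : a = y₁ ^ κ) (hb : b = y₂ ^ κ)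
    (hz : z = (kexp κ (kln κ y₁ + kln κ y₂)) ^ κ) :
    a * b * z ^ 2 + (1 - a * b) * (a + b) * z - a * b = 0 := by
  obtain ⟨hκ0, hκ1⟩ := hκ
  have hκne : κ ≠ 0 := ne_of_gt hκ0
  have ha0 : 0 < a := ha ▸ Real.rpow_pos_of_pos h₁ κ
  have hb0 : 0 < b := hb ▸ Real.rpow_pos_of_pos h₂ κ
  have hainv : y₁ ^ (-κ) = a⁻¹ := by rw [ha, Real.rpow_neg h₁.le]
  have hbinv : y₂ ^ (-κ) = b⁻¹ := by rw [hb, Real.rpow_neg h₂.le]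
  set x : ℝ := kln κ y₁ + kln κ y₂ with hx
  set s : ℝ := κ * x with hs
  set t : ℝ := Real.sqrt (1 + s ^ 2) with ht
  have ht2 : t ^ 2 = 1 + s ^ 2 := Real.sq_sqrt (by positivity)
  have hts : |s| < t := by
    nlinarith [Real.sqrt_nonneg (1 + s ^ 2), abs_nonneg s, sq_abs s]
  have hbase : 0 < s + t := by
    rcases abs_lt.mp hts with ⟨h', _⟩; linarith
  have hterm : 1 + κ ^ 2 * x ^ 2 = 1 + s ^ 2 := by rw [hs]; ring
  have hzb : z = s + t := by
    rw [hz, kexp, hterm, ← ht, ← hs, ← Real.rpow_mul hbase.le]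
    rw [one_div, inv_mul_cancel₀ hκne, Real.rpow_one]
  have hq : z ^ 2 - 2 * s * z - 1 = 0 := by
    rw [hzb]; linear_combination ht2
  have key : 2 * s * (a * b) = (a * b - 1) * (a + b) := by
    rw [hs, hx]
    simp only [kln, hainv, hbinv, ← ha, ← hb]
    field_simp
    ring
  linear_combination (a * b) * hq + z * key
end

section
/- Let Ω be a finite set with reference probability μ, p a strictly positive density, and u : Ω → ℝ with E_p[u] = 0. Then there exists a unique ψ ∈ ℝ such that E_p[exp_κ(u − ψ)] = 1; moreover the map ψ ↦ E_p[exp_κ(u − ψ)] is strictly decreasing, tends to +∞ as ψ → −∞ and to 0 as ψ → +∞. -/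
lemma sqrt_gt_lin (κ x : ℝ) : κ * x < Real.sqrt (1 + κ ^ 2 * x ^ 2) :=
  calc κ * x ≤ |κ * x| := le_abs_self _
    _ = Real.sqrt ((κ * x) ^ 2) := (Real.sqrt_sq_eq_abs _).symm
    _ < _ := Real.sqrt_lt_sqrt (sq_nonneg _) (by nlinarith)

lemma base_pos (κ x : ℝ) : 0 < κ * x + Real.sqrt (1 + κ ^ 2 * x ^ 2) := by
  have h := sqrt_gt_lin κ (-x)
  have hx : (-x) ^ 2 = x ^ 2 := by ring
  rw [hx] at h
  linarith

lemma base_strictMono {κ : ℝ} (hκ : 0 < κ) :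
    StrictMono fun x => κ * x + Real.sqrt (1 + κ ^ 2 * x ^ 2) := by
  intro x y hxy
  set S := Real.sqrt (1 + κ ^ 2 * x ^ 2) with hS
  set T := Real.sqrt (1 + κ ^ 2 * y ^ 2) with hT
  have hS2 : S ^ 2 = 1 + κ ^ 2 * x ^ 2 := Real.sq_sqrt (by positivity)
  have hT2 : T ^ 2 = 1 + κ ^ 2 * y ^ 2 := Real.sq_sqrt (by positivity)
  have h1 := base_pos κ x
  have h2 := base_pos κ y
  have h3 : 0 < κ * (-x) + S := by
    have := base_pos κ (-x); have hx : (-x) ^ 2 = x ^ 2 := by ring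
    rw [hx] at this; exact this
  have h4 : 0 < κ * (-y) + T := by
    have := base_pos κ (-y); have hy : (-y) ^ 2 = y ^ 2 := by ring
    rw [hy] at this; exact this
  show κ * x + S < κ * y + T
  nlinarith [mul_pos (mul_pos hκ (sub_pos.2 hxy)) (by linarith : (0:ℝ) < S + T),
    mul_pos h3 h4, mul_pos h1 h2]


lemma kexp_pos {κ : ℝ} (hκ : 0 < κ) (x : ℝ) : 0 < kexp κ x :=
  Real.rpow_pos_of_pos (base_pos κ x) _

lemma kexp_strictMono {κ : ℝ} (hκ : 0 < κ) : StrictMono (kexp κ) := fun x y hxy =>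
  Real.rpow_lt_rpow (base_pos κ x).le (base_strictMono hκ hxy) (by positivity)

lemma base_continuous (κ : ℝ) :
    Continuous fun x : ℝ => κ * x + Real.sqrt (1 + κ ^ 2 * x ^ 2) := by
  continuity

lemma kexp_continuous {κ : ℝ} (hκ : 0 < κ) : Continuous (kexp κ) := by
  rw [continuous_iff_continuousAt]
  intro x
  exact ((base_continuous κ).continuousAt).rpow_const (Or.inl (base_pos κ x).ne')

lemma base_tendsto_top {κ : ℝ} (hκ : 0 < κ) :
    Filter.Tendsto (fun x : ℝ => κ * x + Real.sqrt (1 + κ ^ 2 * x ^ 2))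
      Filter.atTop Filter.atTop := by
  apply Filter.tendsto_atTop_mono (fun x => ?_)
    (Filter.Tendsto.const_mul_atTop hκ Filter.tendsto_id)
  have := Real.sqrt_nonneg (1 + κ ^ 2 * x ^ 2)
  simp only [id]; linarith

lemma base_eq_inv (κ x : ℝ) :
    κ * x + Real.sqrt (1 + κ ^ 2 * x ^ 2)
      = (κ * (-x) + Real.sqrt (1 + κ ^ 2 * x ^ 2))⁻¹ := by
  have hS2 : Real.sqrt (1 + κ ^ 2 * x ^ 2) ^ 2 = 1 + κ ^ 2 * x ^ 2 :=
    Real.sq_sqrt (by positivity)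
  have h3 : 0 < κ * (-x) + Real.sqrt (1 + κ ^ 2 * x ^ 2) := by
    have := base_pos κ (-x); have hx : (-x) ^ 2 = x ^ 2 := by ring
    rw [hx] at this; exact this
  have hmul : (κ * (-x) + Real.sqrt (1 + κ ^ 2 * x ^ 2))
      * (κ * x + Real.sqrt (1 + κ ^ 2 * x ^ 2)) = 1 := by nlinarith
  exact eq_inv_of_mul_eq_one_right hmul

lemma base_tendsto_zero {κ : ℝ} (hκ : 0 < κ) :
    Filter.Tendsto (fun x : ℝ => κ * x + Real.sqrt (1 + κ ^ 2 * x ^ 2))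
      Filter.atBot (nhds 0) := by
  have h : Filter.Tendsto (fun x : ℝ => κ * (-x) + Real.sqrt (1 + κ ^ 2 * x ^ 2))
      Filter.atBot Filter.atTop := by
    apply Filter.tendsto_atTop_mono (fun x => ?_)
      ((Filter.Tendsto.const_mul_atTop hκ Filter.tendsto_neg_atBot_atTop))
    have := Real.sqrt_nonneg (1 + κ ^ 2 * x ^ 2)
    linarith
  have := h.inv_tendsto_atTop
  refine this.congr fun x => ?_
  exact (base_eq_inv κ x).symm

lemma kexp_tendsto_top {κ : ℝ} (hκ : 0 < κ) :
    Filter.Tendsto (kexp κ) Filter.atTop Filter.atTop :=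
  (tendsto_rpow_atTop (by positivity : (0:ℝ) < 1 / κ)).comp (base_tendsto_top hκ)

lemma kexp_tendsto_zero {κ : ℝ} (hκ : 0 < κ) :
    Filter.Tendsto (kexp κ) Filter.atBot (nhds 0) := by
  have hc : ContinuousAt (fun t : ℝ => t ^ (1 / κ)) 0 :=
    Real.continuousAt_rpow_const 0 (1 / κ) (Or.inr (by positivity))
  have h2 := hc.tendsto.comp (base_tendsto_zero hκ)
  rw [show ((0:ℝ) ^ (1/κ)) = 0 from Real.zero_rpow (by positivity : (0:ℝ) < 1/κ).ne'] at h2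
  exact h2


theorem knormalizer_exists_unique {Ω : Type*} [Fintype Ω] [Nonempty Ω]
    (κ : ℝ) (hκ : κ ∈ Set.Ioo (0:ℝ) 1)
    (μ p u : Ω → ℝ)
    (hμ : ∀ x, 0 < μ x) (hμ1 : ∑ x, μ x = 1)
    (hp : ∀ x, 0 < p x) (hp1 : ∑ x, p x * μ x = 1)
    (hu : ∑ x, u x * p x * μ x = 0) :
    (∃! ψ : ℝ, ∑ x, kexp κ (u x - ψ) * p x * μ x = 1) ∧
    StrictAnti (fun ψ : ℝ => ∑ x, kexp κ (u x - ψ) * p x * μ x) ∧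
    Filter.Tendsto (fun ψ : ℝ => ∑ x, kexp κ (u x - ψ) * p x * μ x) Filter.atBot Filter.atTop ∧
    Filter.Tendsto (fun ψ : ℝ => ∑ x, kexp κ (u x - ψ) * p x * μ x) Filter.atTop (nhds 0) := by
  obtain ⟨hκ0, hκ1⟩ := hκ
  set f : ℝ → ℝ := fun ψ => ∑ x, kexp κ (u x - ψ) * p x * μ x with hf
  have hpm : ∀ x : Ω, 0 < p x * μ x := fun x => mul_pos (hp x) (hμ x)
  -- strict antitonicity
  have hanti : StrictAnti f := by
    intro a b hab
    apply Finset.sum_lt_sum_of_nonempty Finset.univ_nonempty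
    intro x _
    have : kexp κ (u x - b) < kexp κ (u x - a) :=
      kexp_strictMono hκ0 (by linarith)
    calc kexp κ (u x - b) * p x * μ x = kexp κ (u x - b) * (p x * μ x) := by ring
      _ < kexp κ (u x - a) * (p x * μ x) := by
          exact mul_lt_mul_of_pos_right this (hpm x)
      _ = kexp κ (u x - a) * p x * μ x := by ring
  -- continuity
  have hcont : Continuous f := by
    apply continuous_finset_sum
    intro x _
    exact (((kexp_continuous hκ0).comp (by continuity)).mul continuous_const).mul
      continuous_const
  -- tendsto atBot atTop
  obtain ⟨x0⟩ := (inferInstance : Nonempty Ω)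
  have htop : Filter.Tendsto f Filter.atBot Filter.atTop := by
    have hterm : Filter.Tendsto (fun ψ : ℝ => kexp κ (u x0 - ψ) * p x0 * μ x0)
        Filter.atBot Filter.atTop := by
      have harg : Filter.Tendsto (fun ψ : ℝ => u x0 - ψ) Filter.atBot Filter.atTop := by
        apply Filter.tendsto_atTop_add_const_left
        exact Filter.tendsto_neg_atBot_atTop
      exact (((kexp_tendsto_top hκ0).comp harg).atTop_mul_const (hp x0)).atTop_mul_const
        (hμ x0)
    apply Filter.tendsto_atTop_mono _ hterm
    intro ψ
    apply Finset.single_le_sum (f := fun x => kexp κ (u x - ψ) * p x * μ x)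
      (fun x _ => ?_) (Finset.mem_univ x0)
    exact (mul_pos (mul_pos (kexp_pos hκ0 (u x - ψ)) (hp x)) (hμ x)).le
  -- tendsto atTop 0
  have hzero : Filter.Tendsto f Filter.atTop (nhds 0) := by
    have : Filter.Tendsto f Filter.atTop (nhds (∑ x : Ω, 0)) := by
      apply tendsto_finset_sum
      intro x _
      have harg : Filter.Tendsto (fun ψ : ℝ => u x - ψ) Filter.atTop Filter.atBot := by
        apply Filter.tendsto_atBot_add_const_left
        exact Filter.tendsto_neg_atTop_atBot
      have := (((kexp_tendsto_zero hκ0).comp harg).mul_const (p x)).mul_const (μ x)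
      simpa using this
    simpa using this
  refine ⟨?_, hanti, htop, hzero⟩
  -- existence
  have h1 : ∃ a : ℝ, 1 ≤ f a := by
    have := htop.eventually_ge_atTop 1
    obtain ⟨a, ha⟩ := this.exists
    exact ⟨a, ha⟩
  have h2 : ∃ b : ℝ, f b ≤ 1 := by
    have : ∀ᶠ ψ in Filter.atTop, f ψ < 1 :=
      hzero.eventually (eventually_lt_nhds one_pos)
    obtain ⟨b, hb⟩ := this.exists
    exact ⟨b, hb.le⟩
  obtain ⟨a, ha⟩ := h1
  obtain ⟨b, hb⟩ := h2
  have hab : a ≤ b := by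
    by_contra h
    push_neg at h
    have := hanti h
    simp only [hf] at *
    linarith
  have : (1:ℝ) ∈ Set.Icc (f b) (f a) := ⟨hb, ha⟩
  obtain ⟨ψ, hψmem, hψ⟩ := intermediate_value_Icc' hab hcont.continuousOn this
  exact ⟨ψ, hψ, fun ψ' hψ' => hanti.injective (hψ'.trans hψ.symm)⟩
end

section
/- With Ω finite, p a strictly positive density, and q = exp_κ(u − ψ_{κ,p}(u))·p where u is p-centered and ψ_{κ,p}(u) is the unique normalizer, one has ψ_{κ,p}(u) = D_κ(p‖q) = E_p[ln_κ(p/q)]. -/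
lemma kexp_base_pos (κ t : ℝ) : 0 < κ * t + Real.sqrt (1 + κ ^ 2 * t ^ 2) := by
  have h1 : |κ * t| < Real.sqrt (1 + κ ^ 2 * t ^ 2) := by
    rw [show |κ * t| = Real.sqrt ((κ * t) ^ 2) by rw [Real.sqrt_sq_eq_abs]]
    apply Real.sqrt_lt_sqrt (by positivity)
    nlinarith
  have := neg_abs_le (κ * t)
  linarith

lemma kln_inv_kexp {κ : ℝ} (hκ : 0 < κ) (t : ℝ) : kln κ (kexp κ t)⁻¹ = -t := by
  set A := κ * t + Real.sqrt (1 + κ ^ 2 * t ^ 2) with hA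
  have hApos : 0 < A := kexp_base_pos κ t
  have hsq : Real.sqrt (1 + κ ^ 2 * t ^ 2) ^ 2 = 1 + κ ^ 2 * t ^ 2 :=
    Real.sq_sqrt (by positivity)
  have hA2 : A ^ 2 = 1 + 2 * κ * t * A := by
    rw [hA]; nlinarith
  have hkexp : kexp κ t = A ^ (1 / κ) := rfl
  have h1 : (kexp κ t)⁻¹ = A ^ (-(1 / κ)) := by
    rw [hkexp, Real.rpow_neg hApos.le]
  have e1 : (A ^ (-(1 / κ))) ^ κ = A⁻¹ := by
    rw [← Real.rpow_mul hApos.le, show -(1 / κ) * κ = -1 by field_simp,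
      Real.rpow_neg_one]
  have e2 : (A ^ (-(1 / κ))) ^ (-κ) = A := by
    rw [← Real.rpow_mul hApos.le, show -(1 / κ) * -κ = 1 by field_simp,
      Real.rpow_one]
  rw [kln, h1, e1, e2]
  have hAne : A ≠ 0 := hApos.ne'
  field_simp
  nlinarith

theorem knormalizer_eq_divergence {Ω : Type*} [Fintype Ω]
    (κ : ℝ) (hκ : κ ∈ Set.Ioo (0:ℝ) 1)
    (μ p u : Ω → ℝ)
    (hμ : ∀ x, 0 < μ x) (hμ1 : ∑ x, μ x = 1)
    (hp : ∀ x, 0 < p x) (hp1 : ∑ x, p x * μ x = 1)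
    (hu : ∑ x, u x * p x * μ x = 0)
    (ψ : ℝ) (hψ : ∑ x, kexp κ (u x - ψ) * p x * μ x = 1)
    (q : Ω → ℝ) (hq : q = fun x => kexp κ (u x - ψ) * p x) :
    ψ = ∑ x, kln κ (p x / q x) * p x * μ x := by
  have hterm : ∀ x, kln κ (p x / q x) = ψ - u x := by
    intro x
    have hkpos : 0 < kexp κ (u x - ψ) :=
      Real.rpow_pos_of_pos (kexp_base_pos κ (u x - ψ)) _
    have : p x / q x = (kexp κ (u x - ψ))⁻¹ := by
      rw [hq]
      field_simp
      exact div_self (hp x).ne'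
    rw [this, kln_inv_kexp hκ.1]
    ring
  have : ∑ x, kln κ (p x / q x) * p x * μ x
      = ψ * ∑ x, p x * μ x - ∑ x, u x * p x * μ x := by
    rw [Finset.mul_sum, ← Finset.sum_sub_distrib]
    apply Finset.sum_congr rfl
    intro x _
    rw [hterm x]; ring
  rw [this, hp1, hu]; ring
end
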